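/- arXiv:1607.03043 — 4 statements merged into one kernel-verified Lean document; each statement's English description precedes it below -/
import Mathlib

section
/- Let F_n be the free group on basis x_1,...,x_n. For an automorphism α in the pure symmetric automorphism group PΣ_n (i.e., (x_i)α = w_i^{-1} x_i w_i for some words w_i), and for j ≠ i, define χ_{i,j}(α) = φ_j(w_{i,α}), where w_{i,α} is the conjugating word for x_i and φ_j : F_n → ℤ sends x_j to 1 and all other generators to 0. Then χ_{i,j} : PΣ_n → ℤ is a group homomorphism. -/
/-- The homomorphism `φ_j : F_n → ℤ` (written multiplicatively) sending the generator `x_j`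
to `1` and all other generators to `0`. -/
def phiMap (n : ℕ) (j : Fin n) : FreeGroup (Fin n) →* Multiplicative ℤ :=
  FreeGroup.lift fun k => Multiplicative.ofAdd (if k = j then (1 : ℤ) else 0)

/-- An automorphism of the free group `F_n` is pure symmetric if it takes each basis element
to a conjugate of itself. -/
def IsPureSymmetric {n : ℕ} (α : MulAut (FreeGroup (Fin n))) : Prop :=
  ∀ i : Fin n, ∃ w : FreeGroup (Fin n),
    α (FreeGroup.of i) = w⁻¹ * FreeGroup.of i * w

/-!
Conjugating words of `x_i` for `α` followed by `β` may be taken to be `wβ * β wα`, and any two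
conjugating words differ by an element of the centralizer of `x_i`, which `φ_j` kills for
`j ≠ i`. To see the latter, map `F_n` to the lamplighter group `ℤ ≀ ℤ`, sending `x_i` to the
shift `t`, `x_j` to a lamp at the origin and the other generators to `1`; then `φ_j` becomes the
total lamp count, and an element commuting with `t` has a shift-invariant, finitely supported,
hence trivial lamp configuration. Finally `φ_j ∘ β = φ_j`, since `β` is pure symmetric and `ℤ`
is abelian.
-/

open Multiplicative

theorem Finsupp.eq_zero_of_periodic {M : Type*} [Zero M] {p : ℤ →₀ M}
    (hp : Function.Periodic p 1) : p = 0 := by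
  have hconst (x : ℤ) : p x = p 0 := by simpa using hp.int_mul_eq x
  obtain ⟨x, hx⟩ := Infinite.exists_notMem_finset p.support
  ext y
  rw [hconst y, ← hconst x, Finsupp.notMem_support_iff.mp hx, Finsupp.coe_zero, Pi.zero_apply]

theorem commute_mul_inv_of_conj_eq {G : Type*} [Group G] {a w u : G}
    (h : w⁻¹ * a * w = u⁻¹ * a * u) : Commute (w * u⁻¹) a := by
  have := congrArg (fun x => w * x * u⁻¹) h
  simp only [mul_assoc, mul_inv_cancel_left, mul_inv_cancel, mul_one] at this
  rw [Commute, SemiconjBy, mul_assoc, ← this]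

namespace Lamplighter

attribute [local instance] Finsupp.comapDistribMulAction

noncomputable def shift : Multiplicative ℤ →* MulAut (Multiplicative (ℤ →₀ ℤ)) :=
  (MulAutMultiplicative (ℤ →₀ ℤ)).symm.toMonoidHom.comp
    (DistribMulAction.toAddAut (Multiplicative ℤ) (ℤ →₀ ℤ))

lemma toAdd_shift (k : Multiplicative ℤ) (f : Multiplicative (ℤ →₀ ℤ)) :
    toAdd (shift k f) = k • toAdd f :=
  rfl

lemma shift_apply (k : Multiplicative ℤ) (f : Multiplicative (ℤ →₀ ℤ)) (x : ℤ) :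
    toAdd (shift k f) x = toAdd f (x - toAdd k) := by
  rw [toAdd_shift, Finsupp.comapSMul_apply, sub_eq_neg_add]
  rfl

abbrev _root_.Lamplighter := Multiplicative (ℤ →₀ ℤ) ⋊[shift] Multiplicative ℤ

noncomputable def lampCount : Lamplighter →* Multiplicative ℤ :=
  SemidirectProduct.lift Finsupp.degree.toMultiplicative 1 fun k => by
    refine MonoidHom.ext fun f => ?_
    simp [toAdd_shift, Finsupp.comapSMul_def]

noncomputable abbrev t : Lamplighter := SemidirectProduct.inr (ofAdd 1)

lemma left_eq_one_of_commute {g : Lamplighter} (hg : Commute g t) : g.left = 1 := by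
  have hleft := congrArg SemidirectProduct.left hg.eq
  simp only [SemidirectProduct.mul_left, SemidirectProduct.left_inr,
    SemidirectProduct.right_inr, map_one, mul_one, one_mul] at hleft
  refine toAdd.injective (Finsupp.eq_zero_of_periodic fun x => ?_)
  conv_lhs => rw [hleft]
  rw [shift_apply]
  simp

lemma lampCount_eq_one_of_commute {g : Lamplighter} (hg : Commute g t) : lampCount g = 1 := by
  rw [← SemidirectProduct.inl_left_mul_inr_right g, left_eq_one_of_commute hg]
  simp [lampCount]

end Lamplighter

noncomputable def lamplighterRep (n : ℕ) (i j : Fin n) : FreeGroup (Fin n) →* Lamplighter :=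
  FreeGroup.lift fun k =>
    if k = i then Lamplighter.t
    else if k = j then SemidirectProduct.inl (ofAdd (Finsupp.single 0 1))
    else 1

lemma lampCount_comp_lamplighterRep {n : ℕ} {i j : Fin n} (hij : j ≠ i) :
    Lamplighter.lampCount.comp (lamplighterRep n i j) = phiMap n j := by
  refine FreeGroup.ext_hom _ _ fun k => ?_
  rcases eq_or_ne k i with rfl | hki
  · simp [lamplighterRep, phiMap, Lamplighter.lampCount, hij.symm]
  · rcases eq_or_ne k j with rfl | hkj
    · simp [lamplighterRep, phiMap, Lamplighter.lampCount, hki]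
    · simp [lamplighterRep, phiMap, hki, hkj]

theorem phiMap_eq_one_of_commute {n : ℕ} {i j : Fin n} (hij : j ≠ i) {c : FreeGroup (Fin n)}
    (hc : Commute c (FreeGroup.of i)) : phiMap n j c = 1 := by
  rw [← lampCount_comp_lamplighterRep hij, MonoidHom.comp_apply]
  refine Lamplighter.lampCount_eq_one_of_commute ?_
  simpa [lamplighterRep] using hc.map (lamplighterRep n i j)

theorem IsPureSymmetric.map_apply {n : ℕ} {β : MulAut (FreeGroup (Fin n))}
    (hβ : IsPureSymmetric β) {G : Type*} [CommGroup G] (f : FreeGroup (Fin n) →* G)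
    (g : FreeGroup (Fin n)) : f (β g) = f g := by
  suffices f.comp β.toMonoidHom = f from DFunLike.congr_fun this g
  refine FreeGroup.ext_hom _ _ fun k => ?_
  obtain ⟨v, hv⟩ := hβ k
  simp [hv, mul_comm]

theorem stmt0_general (n : ℕ) (i j : Fin n) (hij : j ≠ i)
    (α β : MulAut (FreeGroup (Fin n)))
    (hβ : IsPureSymmetric β)
    (wα wβ w : FreeGroup (Fin n))
    (hwα : α (FreeGroup.of i) = wα⁻¹ * FreeGroup.of i * wα)
    (hwβ : β (FreeGroup.of i) = wβ⁻¹ * FreeGroup.of i * wβ)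
    (hw : β (α (FreeGroup.of i)) = w⁻¹ * FreeGroup.of i * w) :
    phiMap n j w = phiMap n j wα * phiMap n j wβ := by
  have hconj : w⁻¹ * FreeGroup.of i * w =
      (wβ * β wα)⁻¹ * FreeGroup.of i * (wβ * β wα) := by
    rw [← hw, hwα, map_mul, map_mul, map_inv, hwβ]
    group
  calc phiMap n j w = phiMap n j (w * (wβ * β wα)⁻¹) * phiMap n j (wβ * β wα) := by
        rw [← map_mul, inv_mul_cancel_right]
    _ = phiMap n j wα * phiMap n j wβ := by
      rw [phiMap_eq_one_of_commute hij (commute_mul_inv_of_conj_eq hconj), one_mul, map_mul,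
        hβ.map_apply, mul_comm]

/-- `χ_{i,j}` is a group homomorphism `PΣ_n → ℤ`: it is well defined (independent of the
choice of conjugating words) and additive under composition of pure symmetric
automorphisms.  Here the value of `χ_{i,j}` on an automorphism is `φ_j` of any conjugating
word for `x_i`, and composition `α` followed by `β` corresponds to the automorphism
`x ↦ β (α x)`. -/
theorem stmt0 (n : ℕ) (i j : Fin n) (hij : j ≠ i)
    (α β : MulAut (FreeGroup (Fin n)))
    (hα : IsPureSymmetric α) (hβ : IsPureSymmetric β)
    (wα wβ w : FreeGroup (Fin n))
    (hwα : α (FreeGroup.of i) = wα⁻¹ * FreeGroup.of i * wα)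
    (hwβ : β (FreeGroup.of i) = wβ⁻¹ * FreeGroup.of i * wβ)
    (hw : β (α (FreeGroup.of i)) = w⁻¹ * FreeGroup.of i * w) :
    phiMap n j w = phiMap n j wα * phiMap n j wβ :=
  stmt0_general n i j hij α β hβ wα wβ w hwα hwβ hw
end

section
/- Let E = {1, 1̄, ..., n, n̄} and call a subset A ⊆ E a symmetric ideal edge if |A| ≥ 2, E \ A ≠ ∅, and there is exactly one index i such that A splits the pair {i, ī} (i.e., A contains exactly one of i, ī). Two ideal edges A, A' are compatible if A ⊆ A', A' ⊆ A, or A ∩ A' = ∅. For a positive character (so A is ascending iff A contains the unsplit-side element j, i.e., j ∈ A where {j, j̄} is the split pair), every collection of pairwise compatible ascending symmetric ideal edges is contained in the star of some hub Θ_i = E \ {ī}, i ∈ [n]. -/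
/-- `A` splits the pair `{i, ī}`: it contains exactly one of `i = (i, false)`,
`ī = (i, true)`. -/
def Splits {n : ℕ} (A : Finset (Fin n × Bool)) (i : Fin n) : Prop :=
  Xor' ((i, false) ∈ A) ((i, true) ∈ A)

/-- Symmetric ideal edge: `|A| ≥ 2`, `E \ A ≠ ∅`, and exactly one pair is split. -/
def IsSIE {n : ℕ} (A : Finset (Fin n × Bool)) : Prop :=
  2 ≤ A.card ∧ A ≠ Finset.univ ∧ ∃! i : Fin n, Splits A i

/-- Ascending (for a positive character): `A` contains the unbarred element `j = (j, false)`
of its split pair. -/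
def IsAscSIE {n : ℕ} (A : Finset (Fin n × Bool)) : Prop :=
  IsSIE A ∧ ∀ i : Fin n, Splits A i → (i, false) ∈ A

/-- Compatibility of ideal edges. -/
def Compat {n : ℕ} (A B : Finset (Fin n × Bool)) : Prop :=
  A ⊆ B ∨ B ⊆ A ∨ Disjoint A B

/-!
Take a member `A` of the family of maximal cardinality and let `{j, j̄}` be the pair it splits;
being ascending, `A` contains `j` but not `j̄`. Every other member `B` is compatible with `A`, so
by maximality it lies inside `A` or is disjoint from it. In the first case `j̄ ∉ B` trivially; in
the second `j ∉ B`, and then `j̄ ∉ B` too, since an ascending edge containing `j̄` must split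
`{j, j̄}` and hence contain `j`. So the whole family lies in the hub `Θ_j`.
-/

section

variable {n : ℕ} {A B : Finset (Fin n × Bool)} {j : Fin n}

theorem IsAscSIE.mem_false_of_mem_true (hA : IsAscSIE A) (h : (j, true) ∈ A) :
    (j, false) ∈ A := by
  by_contra hf
  exact hf (hA.2 j (Or.inr ⟨h, hf⟩))

theorem IsAscSIE.notMem_true_of_splits (hA : IsAscSIE A) (hj : Splits A j) :
    (j, true) ∉ A := fun ht =>
  hj.elim (fun h => h.2 ht) (fun h => h.2 (hA.mem_false_of_mem_true ht))

theorem IsAscSIE.exists_splits (hA : IsAscSIE A) : ∃ j, Splits A j :=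
  hA.1.2.2.exists

theorem Compat.subset_or_disjoint_of_card_le (h : Compat A B) (hcard : B.card ≤ A.card) :
    B ⊆ A ∨ Disjoint A B := by
  rcases h with hAB | hBA | hdisj
  · exact Or.inl (Finset.eq_of_subset_of_card_le hAB hcard).ge
  · exact Or.inl hBA
  · exact Or.inr hdisj

theorem IsAscSIE.notMem_true_of_subset_or_disjoint (hA : IsAscSIE A) (hB : IsAscSIE B)
    (hj : Splits A j) (h : B ⊆ A ∨ Disjoint A B) : (j, true) ∉ B := by
  rcases h with hBA | hdisj
  · exact fun ht => hA.notMem_true_of_splits hj (hBA ht)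
  · have hjA : (j, false) ∈ A := hA.2 j hj
    exact fun ht => Finset.disjoint_left.mp hdisj hjA (hB.mem_false_of_mem_true ht)

end

/-- Every collection of pairwise compatible ascending symmetric ideal edges (for a positive
character) is contained in the star of some hub `Θ_i = E \ {ī}`, i.e. all its members are
contained in a common `Θ_i`. -/
theorem stmt9 (n : ℕ) (hn : 1 ≤ n) (S : Set (Finset (Fin n × Bool)))
    (hS : ∀ A ∈ S, IsAscSIE A)
    (hcompat : ∀ A ∈ S, ∀ B ∈ S, Compat A B) :
    ∃ i : Fin n, ∀ A ∈ S, A ⊆ Finset.univ.erase (i, true) := by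
  rcases S.eq_empty_or_nonempty with rfl | hne
  · exact ⟨⟨0, hn⟩, by simp⟩
  obtain ⟨A, hAS, hmax⟩ := S.toFinite.exists_maximalFor Finset.card S hne
  obtain ⟨j, hj⟩ := (hS A hAS).exists_splits
  refine ⟨j, fun B hBS => Finset.subset_erase.mpr ⟨Finset.subset_univ B, ?_⟩⟩
  have hcard : B.card ≤ A.card := by
    by_contra! hlt
    exact hlt.not_ge (hmax hBS hlt.le)
  exact (hS A hAS).notMem_true_of_subset_or_disjoint (hS B hBS) hj
    ((hcompat A hAS B hBS).subset_or_disjoint_of_card_le hcard)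
end

section
/- With the hypotheses of the two-variable Morse Lemma, if additionally every 0-cell v with s ≤ h(v) < t satisfies H̃_{m+1}(lk^↑ v) = 0, then the inclusion Y_{h≥t} → Y_{h≥s} induces an injection on reduced homology H̃_{m+1}. -/
/-- A set of finite sets is a simplicial complex if it is downward closed. -/
def IsCpx {V : Type*} (K : Set (Finset V)) : Prop :=
  ∀ s ∈ K, ∀ t : Finset V, t ⊆ s → t ∈ K

/-- Geometric realization of an abstract simplicial complex. -/
abbrev Realization {V : Type*} (K : Set (Finset V)) : Type _ :=
  {g : V → ℝ // (∀ x, 0 ≤ g x) ∧ (Function.support g).Finite ∧ (∑ᶠ x, g x) = 1 ∧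
    ∀ s : Finset V, (∀ x ∈ s, g x ≠ 0) → s ∈ K}

/-- `m`-connectedness (for `m : ℤ`, so `(-1)`-connected means nonempty). -/
def IsConnTop (X : Type*) [TopologicalSpace X] (m : ℤ) : Prop :=
  (-1 ≤ m → Nonempty X) ∧
  ∀ k : ℕ, (k : ℤ) ≤ m → ∀ x : X, Subsingleton (HomotopyGroup (Fin k) X x)

/-- The lexicographic order on `(h, f)`-values of vertices. -/
def lexLt {V : Type*} (h f : V → ℝ) (v w : V) : Prop :=
  h v < h w ∨ (h v = h w ∧ f v < f w)

/-- The ascending link of a vertex with respect to the Morse function `(h, f)`. -/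
def AscLk {V : Type*} [DecidableEq V] (K : Set (Finset V)) (h f : V → ℝ) (v : V) :
    Set (Finset V) :=
  {s | v ∉ s ∧ insert v s ∈ K ∧ ∀ w ∈ s, lexLt h f v w}

/-- The full subcomplex `Y_{h ≥ s}` spanned by vertices of height at least `s`. -/
def SubLevel {V : Type*} (K : Set (Finset V)) (h : V → ℝ) (s : EReal) :
    Set (Finset V) :=
  {σ | σ ∈ K ∧ ∀ v ∈ σ, s ≤ (h v : EReal)}

/-- Ordered tuples (with repetitions) of vertices spanning a simplex of `K`; degree-`d`
generators of the augmented ordered chain complex of `K` (which computes reduced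
homology). -/
def TupK {V : Type*} (K : Set (Finset V)) (d : ℕ) : Type _ :=
  {f : Fin d → V // ∀ s : Finset V, (∀ x ∈ s, x ∈ Set.range f) → s ∈ K}

/-- Augmented ordered simplicial chains of `K`. -/
abbrev ChainsK {V : Type*} (K : Set (Finset V)) (d : ℕ) : Type _ :=
  FreeAbelianGroup (TupK K d)

/-- The simplicial boundary map. -/
noncomputable def bdK {V : Type*} (K : Set (Finset V)) (d : ℕ) :
    ChainsK K (d + 1) →+ ChainsK K d :=
  FreeAbelianGroup.lift fun f =>
    ∑ i : Fin (d + 1), ((-1 : ℤ) ^ (i : ℕ)) •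
      FreeAbelianGroup.of
        (⟨f.1 ∘ Fin.succAbove i, fun s hs => f.2 s fun x hx => by
            obtain ⟨j, hj⟩ := hs x hx
            exact ⟨Fin.succAbove i j, hj⟩⟩ : TupK K d)

/-- The chain map induced by an inclusion of complexes. -/
noncomputable def chainIncl {V : Type*} {K K' : Set (Finset V)} (hKK' : K ⊆ K')
    (d : ℕ) : ChainsK K d →+ ChainsK K' d :=
  FreeAbelianGroup.map fun g => ⟨g.1, fun s hs => hKK' (g.2 s hs)⟩

/-!
A filling `w` of `z` in `Y_{h ≥ s}` is pushed above `t` one vertex at a time. Let `v` be the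
lexicographically lowest vertex of `w` below `t`. Split `w` into the part `w_v` through `v` and
the rest. Since `z` lies above `t`, the cycle `∂w_v = z - ∂(w - w_v)` avoids `v`, and by
minimality of `v` it lies in the ascending link `lk↑ v`; there it bounds some `b` by hypothesis,
and `(w - w_v) + b` is a new filling without `v` whose new vertices are neighbours of `v` above
it. Measuring a vertex `u` below `t` by `⌈(t - h u) / ε⌉₊` and then by `f u` (decreasingly),
these new vertices are strictly smaller than `v`: the `ε`-gap of `h` along edges and the
finiteness of the range of `f` make the multiset of these measures decrease in the well-founded
Dershowitz–Manna order, so the process terminates.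
-/

namespace FreeAbelianGroup

variable {α β : Type*}

theorem toFinsupp_map (f : α → β) (x : FreeAbelianGroup α) :
    (map f x).toFinsupp = Finsupp.mapDomain f x.toFinsupp := by
  rw [← Finsupp.mapDomain.addMonoidHom_apply, ← AddMonoidHom.comp_apply,
    ← AddMonoidHom.comp_apply]
  congr 1
  ext
  simp [Finsupp.mapDomain_single]

theorem map_injective {f : α → β} (hf : Function.Injective f) :
    Function.Injective (map f) := fun x y hxy =>
  (equivFinsupp α).injective <| Finsupp.mapDomain_injective hf <| by
    simpa only [equivFinsupp_apply, toFinsupp_map] using congrArg toFinsupp hxy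

theorem support_map_subset [DecidableEq β] (f : α → β) (x : FreeAbelianGroup α) :
    (map f x).support ⊆ x.support.image f := by
  rw [support, toFinsupp_map]
  exact Finsupp.mapDomain_support

theorem mem_range_map {f : α → β} (hf : Function.Injective f) {x : FreeAbelianGroup β}
    (hx : ∀ b ∈ x.support, b ∈ Set.range f) : x ∈ Set.range (map f) :=
  ⟨Finsupp.toFreeAbelianGroup (x.toFinsupp.comapDomain f hf.injOn),
    (equivFinsupp β).injective <| by
      simp only [equivFinsupp_apply, toFinsupp_map, toFinsupp_toFreeAbelianGroup,
        Finsupp.mapDomain_comapDomain f hf _ hx]⟩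

theorem support_sub [DecidableEq α] (a b : FreeAbelianGroup α) :
    (a - b).support ⊆ a.support ∪ b.support := fun x hx => by
  simpa using support_add a (-b) (by rwa [← sub_eq_add_neg])

theorem support_sum_subset {ι : Type*} [DecidableEq α] [DecidableEq ι] (s : Finset ι)
    (g : ι → FreeAbelianGroup α) :
    (∑ i ∈ s, g i).support ⊆ s.biUnion fun i => (g i).support := by
  simp only [support, map_sum]
  exact Finsupp.support_finsetSum

theorem support_zsmul_subset (n : ℤ) (x : FreeAbelianGroup α) :
    (n • x).support ⊆ x.support := by
  simp only [support, map_zsmul]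
  exact Finsupp.support_smul

theorem support_lift_subset [DecidableEq α] [DecidableEq β] (φ : α → FreeAbelianGroup β)
    (x : FreeAbelianGroup α) :
    (lift φ x).support ⊆ x.support.biUnion fun a => (φ a).support := by
  conv_lhs => rw [eq_sum_support_coeff_smul_of x]
  simp only [map_sum, map_zsmul, lift_apply_of]
  exact (support_sum_subset _ _).trans
    (Finset.biUnion_mono fun a _ => support_zsmul_subset _ _)

noncomputable def filter (p : α → Prop) [DecidablePred p] (x : FreeAbelianGroup α) :
    FreeAbelianGroup α :=
  Finsupp.toFreeAbelianGroup (x.toFinsupp.filter p)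

theorem filter_add_filter_not (p : α → Prop) [DecidablePred p] (x : FreeAbelianGroup α) :
    x.filter p + x.filter (fun a => ¬ p a) = x := by
  rw [filter, filter, ← map_add, Finsupp.filter_add_filter_not,
    Finsupp.toFreeAbelianGroup_toFinsupp]

theorem support_filter (p : α → Prop) [DecidablePred p] (x : FreeAbelianGroup α) :
    (x.filter p).support = x.support.filter p := by
  rw [support, filter, toFinsupp_toFreeAbelianGroup, Finsupp.support_filter, support]

end FreeAbelianGroup

namespace Fin

/-- `(i, j) ↦ (i.succAbove j, j.predAbove i)` is a fixed-point-free involution that flips the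
sign `(-1) ^ (i + j)`. -/
theorem sum_sum_neg_one_pow_smul_eq_zero {A : Type*} [AddCommGroup A] {n : ℕ}
    (G : Fin (n + 2) → Fin (n + 1) → A)
    (hG : ∀ i j, G (i.succAbove j) (j.predAbove i) = G i j) :
    ∑ i : Fin (n + 2), ∑ j : Fin (n + 1), ((-1 : ℤ) ^ (i + j : ℕ)) • G i j = 0 := by
  rw [← Finset.sum_product']
  refine Finset.sum_ninvolution (fun p => (p.1.succAbove p.2, p.2.predAbove p.1)) ?_ ?_
    (fun _ => Finset.mem_univ _) ?_
  · rintro ⟨i, j⟩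
    rw [hG, neg_one_pow_succAbove_add_predAbove, neg_smul, add_neg_cancel]
  · rintro ⟨i, j⟩ -
    simp [succAbove_ne]
  · rintro ⟨i, j⟩
    simp [succAbove_succAbove_predAbove, predAbove_predAbove_succAbove]

end Fin

section OrderedChains

variable {V : Type*} {K K' : Set (Finset V)} {d : ℕ}

def TupK.face (g : TupK K (d + 1)) (i : Fin (d + 1)) : TupK K d :=
  ⟨g.1 ∘ i.succAbove, fun s hs => g.2 s fun x hx => by
    obtain ⟨j, hj⟩ := hs x hx
    exact ⟨i.succAbove j, hj⟩⟩

theorem TupK.range_face_subset (g : TupK K (d + 1)) (i : Fin (d + 1)) :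
    Set.range (g.face i).1 ⊆ Set.range g.1 :=
  fun _ ⟨j, hj⟩ => ⟨i.succAbove j, hj⟩

theorem bdK_of (g : TupK K (d + 1)) :
    bdK K d (.of g) =
      ∑ i : Fin (d + 1), ((-1 : ℤ) ^ (i : ℕ)) • FreeAbelianGroup.of (g.face i) :=
  FreeAbelianGroup.lift_apply_of _ _

theorem bdK_bdK (x : ChainsK K (d + 2)) : bdK K d (bdK K (d + 1) x) = 0 := by
  suffices (bdK K d).comp (bdK K (d + 1)) = 0 from DFunLike.congr_fun this x
  refine FreeAbelianGroup.lift_ext _ _ fun g => ?_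
  simp only [AddMonoidHom.comp_apply, bdK_of, map_sum, map_zsmul, Finset.smul_sum, smul_smul,
    ← pow_add, AddMonoidHom.zero_apply]
  exact Fin.sum_sum_neg_one_pow_smul_eq_zero
    (fun i j => FreeAbelianGroup.of ((g.face i).face j)) fun i j =>
      congrArg FreeAbelianGroup.of <| Subtype.ext <| funext fun k => by
        simp only [TupK.face, Function.comp_apply, Fin.succAbove_succAbove_succAbove_predAbove]

theorem exists_face_of_mem_support_bdK {x : ChainsK K (d + 1)} {g : TupK K d}
    (hg : g ∈ (bdK K d x).support) : ∃ τ ∈ x.support, ∃ i, g = τ.face i := by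
  classical
  obtain ⟨τ, hτ, hgτ⟩ := Finset.mem_biUnion.1 (FreeAbelianGroup.support_lift_subset _ x hg)
  replace hgτ : g ∈ (∑ i : Fin (d + 1), ((-1 : ℤ) ^ (i : ℕ)) •
    FreeAbelianGroup.of (τ.face i)).support := hgτ
  obtain ⟨i, -, hi⟩ := Finset.mem_biUnion.1 (FreeAbelianGroup.support_sum_subset _ _ hgτ)
  have hgi := FreeAbelianGroup.support_zsmul_subset _ _ hi
  simp only [FreeAbelianGroup.support_of, Finset.mem_singleton] at hgi
  exact ⟨τ, hτ, i, hgi⟩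

theorem chainIncl_injective (hKK' : K ⊆ K') (d : ℕ) : Function.Injective (chainIncl hKK' d) :=
  FreeAbelianGroup.map_injective fun _ _ hgg' => Subtype.ext (Subtype.mk.inj hgg')

theorem chainIncl_of (hKK' : K ⊆ K') (g : TupK K d) :
    chainIncl hKK' d (.of g) = .of ⟨g.1, fun s hs => hKK' (g.2 s hs)⟩ :=
  FreeAbelianGroup.map_of_apply g

theorem bdK_chainIncl (hKK' : K ⊆ K') (x : ChainsK K (d + 1)) :
    bdK K' d (chainIncl hKK' (d + 1) x) = chainIncl hKK' d (bdK K d x) := by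
  suffices (bdK K' d).comp (chainIncl hKK' (d + 1)) = (chainIncl hKK' d).comp (bdK K d) from
    DFunLike.congr_fun this x
  refine FreeAbelianGroup.lift_ext _ _ fun g => ?_
  simp only [AddMonoidHom.comp_apply, chainIncl_of, bdK_of, map_sum, map_zsmul]
  exact bdK_of _

theorem exists_of_mem_support_chainIncl (hKK' : K ⊆ K') {x : ChainsK K d} {g : TupK K' d}
    (hg : g ∈ (chainIncl hKK' d x).support) : ∃ g' ∈ x.support, g.1 = g'.1 := by
  classical
  obtain ⟨g', hg', rfl⟩ := Finset.mem_image.1 (FreeAbelianGroup.support_map_subset _ x hg)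
  exact ⟨g', hg', rfl⟩

theorem mem_range_chainIncl (hKK' : K ⊆ K') {x : ChainsK K' d}
    (hx : ∀ g ∈ x.support, ∀ σ, (∀ u ∈ σ, u ∈ Set.range g.1) → σ ∈ K) :
    x ∈ Set.range (chainIncl hKK' d) :=
  FreeAbelianGroup.mem_range_map (fun _ _ hgg' => Subtype.ext (Subtype.mk.inj hgg'))
    fun g hg => ⟨⟨g.1, hx g hg⟩, rfl⟩

variable [DecidableEq V]

noncomputable def chainVerts (x : ChainsK K d) : Finset V :=
  x.support.biUnion fun g => Finset.univ.image g.1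

theorem mem_chainVerts {x : ChainsK K d} {u : V} :
    u ∈ chainVerts x ↔ ∃ g ∈ x.support, u ∈ Set.range g.1 := by
  simp [chainVerts]

theorem singleton_mem_of_mem_chainVerts {x : ChainsK K d} {u : V} (hu : u ∈ chainVerts x) :
    {u} ∈ K := by
  obtain ⟨g, -, hu⟩ := mem_chainVerts.1 hu
  exact g.2 {u} (by simpa using hu)

theorem chainVerts_add_subset (x y : ChainsK K d) :
    chainVerts (x + y) ⊆ chainVerts x ∪ chainVerts y := fun u hu => by
  classical
  obtain ⟨g, hg, hu⟩ := mem_chainVerts.1 hu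
  rcases Finset.mem_union.1 (FreeAbelianGroup.support_add x y hg) with hg | hg
  exacts [Finset.mem_union_left _ (mem_chainVerts.2 ⟨g, hg, hu⟩),
    Finset.mem_union_right _ (mem_chainVerts.2 ⟨g, hg, hu⟩)]

theorem chainVerts_chainIncl_subset (hKK' : K ⊆ K') (x : ChainsK K d) :
    chainVerts (chainIncl hKK' d x) ⊆ chainVerts x := fun u hu => by
  obtain ⟨g, hg, hu⟩ := mem_chainVerts.1 hu
  obtain ⟨g', hg', hgg'⟩ := exists_of_mem_support_chainIncl hKK' hg
  exact mem_chainVerts.2 ⟨g', hg', hgg' ▸ hu⟩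

end OrderedChains

theorem Finset.isDershowitzMannaLT_map_val {α β : Type*} [DecidableEq α] [Preorder β]
    {B B' : Finset α} {g : α → β} {v : α} (hv : v ∈ B) (hv' : v ∉ B')
    (hlt : ∀ u ∈ B', u ∉ B → g u < g v) :
    (B'.val.map g).IsDershowitzMannaLT (B.val.map g) := by
  have hcommon : B'.val.filter (· ∈ B) = B.val.filter (· ∈ B') :=
    (Multiset.Nodup.ext (B'.nodup.filter _) (B.nodup.filter _)).2 fun u => by
      simp only [Multiset.mem_filter, Finset.mem_val, and_comm]
  refine ⟨(B'.val.filter (· ∈ B)).map g, (B'.val.filter (· ∉ B)).map g,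
    (B.val.filter (· ∉ B')).map g, ?_, ?_, ?_, ?_⟩
  · intro hZ
    have hvZ := Multiset.mem_map_of_mem g (Multiset.mem_filter.2 ⟨hv, hv'⟩ :
      v ∈ B.val.filter (· ∉ B'))
    simp [hZ] at hvZ
  · rw [← Multiset.map_add, Multiset.filter_add_not]
  · rw [hcommon, ← Multiset.map_add, Multiset.filter_add_not]
  · simp only [Multiset.mem_map, Multiset.mem_filter, Finset.mem_val]
    rintro _ ⟨u, ⟨hu, huB⟩, rfl⟩
    exact ⟨g v, ⟨v, ⟨hv, hv'⟩, rfl⟩, hlt u hu huB⟩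

theorem Nat.ceil_lt_ceil_of_add_one_le {R : Type*} [Semiring R] [LinearOrder R] [FloorSemiring R]
    [IsStrictOrderedRing R] {x y : R} (hx : 0 ≤ x) (hxy : x + 1 ≤ y) :
    ⌈x⌉₊ < ⌈y⌉₊ :=
  (Nat.lt_succ_self _).trans_le ((Nat.ceil_add_one hx).symm.trans_le (Nat.ceil_le_ceil hxy))

section Morse

variable {V : Type*} {K : Set (Finset V)} {h f : V → ℝ}

theorem subLevel_anti {s s' : EReal} (hss' : s ≤ s') : SubLevel K h s' ⊆ SubLevel K h s :=
  fun _ hσ => ⟨hσ.1, fun v hv => hss'.trans (hσ.2 v hv)⟩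

theorem lexLt_iff_toLex_lt {v w : V} :
    lexLt h f v w ↔ toLex (h v, f v) < toLex (h w, f w) :=
  (Prod.Lex.toLex_lt_toLex (x := (h v, f v)) (y := (h w, f w))).symm

noncomputable def morseKey (h f : V → ℝ) (t ε : ℝ) (u : V) : ℕ ×ₗ (Set.range f)ᵒᵈ :=
  toLex (⌈(t - h u) / ε⌉₊, OrderDual.toDual ⟨f u, u, rfl⟩)

theorem morseKey_lt {t ε : ℝ} (hε : 0 < ε) {u v : V}
    (hgap : h v ≠ h u → ε ≤ |h v - h u|)
    (hlex : lexLt h f v u) (hut : h u < t) : morseKey h f t ε u < morseKey h f t ε v := by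
  rw [morseKey, morseKey, Prod.Lex.toLex_lt_toLex]
  rcases hlex with hlt | ⟨heq, hflt⟩
  · refine Or.inl (Nat.ceil_lt_ceil_of_add_one_le (div_nonneg (by linarith) hε.le) ?_)
    have hstep : ε ≤ h u - h v := by
      simpa [abs_sub_comm, abs_of_pos (sub_pos.2 hlt)] using hgap hlt.ne
    rw [div_add_one hε.ne']
    gcongr
    linarith
  · exact Or.inr ⟨by rw [heq], hflt⟩

variable [DecidableEq V]

theorem lexLt_of_not_lexLt
    (htie : ∀ v w : V, ({v, w} : Finset V) ∈ K → v ≠ w → h v = h w → f v ≠ f w)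
    {u v : V} (hadj : ({v, u} : Finset V) ∈ K) (hne : v ≠ u) (hnot : ¬ lexLt h f u v) :
    lexLt h f v u := by
  rw [lexLt_iff_toLex_lt, not_lt] at *
  refine hnot.lt_of_ne fun heq => ?_
  obtain ⟨hh, hf⟩ := Prod.ext_iff.1 (toLex.injective heq)
  exact htie v u hadj hne hh hf

theorem le_of_mem_chainVerts {s : EReal} {d : ℕ}
    {x : ChainsK (SubLevel K h s) d} {u : V} (hu : u ∈ chainVerts x) : s ≤ h u :=
  (singleton_mem_of_mem_chainVerts hu).2 u (Finset.mem_singleton_self u)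

theorem ascLk_subset_subLevel (hK : IsCpx K) {v : V} {s : EReal} (hv : s ≤ h v) :
    AscLk K h f v ⊆ SubLevel K h s := fun σ ⟨_, hvσ, hlex⟩ =>
  ⟨hK _ hvσ σ (Finset.subset_insert v σ), fun u hu =>
    hv.trans (EReal.coe_le_coe_iff.2 ((hlex u hu).elim le_of_lt fun h => h.1.le))⟩

theorem mem_ascLk_of_forall_not_lexLt (hK : IsCpx K)
    (htie : ∀ v w : V, ({v, w} : Finset V) ∈ K → v ≠ w → h v = h w → f v ≠ f w)
    {t : ℝ} {v : V} (hvt : h v < t) {σ : Finset V} (hvσ : v ∉ σ) (hσ : insert v σ ∈ K)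
    (hmin : ∀ u ∈ σ, h u < t → ¬ lexLt h f u v) : σ ∈ AscLk K h f v := by
  refine ⟨hvσ, hσ, fun u hu => ?_⟩
  by_cases hut : h u < t
  · refine lexLt_of_not_lexLt htie (hK _ hσ _ ?_) (fun h => hvσ (h ▸ hu)) (hmin u hu hut)
    simp [Finset.insert_subset_iff, hu]
  · exact Or.inl (hvt.trans_le (not_lt.1 hut))

theorem bdK_mem_range_chainIncl_ascLk (hK : IsCpx K)
    (htie : ∀ v w : V, ({v, w} : Finset V) ∈ K → v ≠ w → h v = h w → f v ≠ f w)
    {s : EReal} {t : ℝ} (hst : s ≤ t) {d : ℕ} {z : ChainsK (SubLevel K h t) (d + 1)}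
    {wv wo : ChainsK (SubLevel K h s) (d + 2)}
    (hw : bdK _ (d + 1) (wv + wo) = chainIncl (subLevel_anti hst) (d + 1) z)
    {v : V} (hvs : s ≤ h v) (hvt : h v < t)
    (hwv : ∀ g ∈ wv.support, v ∈ Set.range g.1 ∧
      ∀ u ∈ Set.range g.1, h u < t → ¬ lexLt h f u v)
    (hwo : ∀ g ∈ wo.support, v ∉ Set.range g.1) :
    bdK _ (d + 1) wv ∈
      Set.range (chainIncl (ascLk_subset_subLevel (f := f) hK hvs) (d + 1)) := by
  classical
  -- `∂wv = z - ∂wo`, and neither `z` (which lies above `t > h v`) nor `∂wo` involves `v`.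
  have hav : ∀ g ∈ (bdK _ (d + 1) wv).support, v ∉ Set.range g.1 := by
    have : bdK _ (d + 1) wv = chainIncl (subLevel_anti hst) (d + 1) z - bdK _ (d + 1) wo := by
      rw [← hw, map_add, add_sub_cancel_right]
    intro g hg hvg
    rcases Finset.mem_union.1 (FreeAbelianGroup.support_sub _ _ (this ▸ hg)) with hg | hg
    · obtain ⟨g', -, hgg'⟩ := exists_of_mem_support_chainIncl _ hg
      have := (g'.2 {v} (by simpa [← hgg'] using hvg)).2 v (Finset.mem_singleton_self v)
      exact hvt.not_ge (EReal.coe_le_coe_iff.1 this)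
    · obtain ⟨τ, hτ, i, rfl⟩ := exists_face_of_mem_support_bdK hg
      exact hwo τ hτ (τ.range_face_subset i hvg)
  refine mem_range_chainIncl _ fun g hg σ hσ => ?_
  obtain ⟨τ, hτ, i, rfl⟩ := exists_face_of_mem_support_bdK hg
  obtain ⟨hvτ, hmin⟩ := hwv τ hτ
  have hστ : ∀ u ∈ σ, u ∈ Set.range τ.1 := fun u hu => τ.range_face_subset i (hσ u hu)
  refine mem_ascLk_of_forall_not_lexLt hK htie hvt (fun hvσ => hav _ hg (hσ v hvσ)) (τ.2 _ ?_).1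
    fun u hu => hmin u (hστ u hu)
  exact fun u hu => (Finset.mem_insert.1 hu).elim (fun hu => hu ▸ hvτ) (hστ u)

theorem exists_fill_avoiding_vertex (hK : IsCpx K)
    (htie : ∀ v w : V, ({v, w} : Finset V) ∈ K → v ≠ w → h v = h w → f v ≠ f w)
    {s : EReal} {t : ℝ} (hst : s ≤ t) {d : ℕ} {z : ChainsK (SubLevel K h t) (d + 1)}
    {w : ChainsK (SubLevel K h s) (d + 2)}
    (hw : bdK _ (d + 1) w = chainIncl (subLevel_anti hst) (d + 1) z)
    {v : V} (hv : v ∈ chainVerts w) (hvt : h v < t)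
    (hmin : ∀ u ∈ chainVerts w, h u < t → ¬ lexLt h f u v)
    (hlk : ∀ c : ChainsK (AscLk K h f v) (d + 1), bdK _ d c = 0 →
      c ∈ Set.range (bdK (AscLk K h f v) (d + 1))) :
    ∃ w' : ChainsK (SubLevel K h s) (d + 2),
      bdK _ (d + 1) w' = chainIncl (subLevel_anti hst) (d + 1) z ∧ v ∉ chainVerts w' ∧
      ∀ u ∈ chainVerts w', u ∈ chainVerts w ∨
        (({v, u} : Finset V) ∈ K ∧ lexLt h f v u) := by
  classical
  set p : TupK (SubLevel K h s) (d + 2) → Prop := fun g => v ∈ Set.range g.1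
  have hsplit : w.filter p + w.filter (¬ p ·) = w := FreeAbelianGroup.filter_add_filter_not p w
  have hwo : ∀ g ∈ (w.filter (¬ p ·)).support, g ∈ w.support ∧ v ∉ Set.range g.1 :=
    fun g hg => Finset.mem_filter.1 (FreeAbelianGroup.support_filter (¬ p ·) w ▸ hg)
  have hvs := le_of_mem_chainVerts hv
  obtain ⟨c, hc⟩ := bdK_mem_range_chainIncl_ascLk hK htie hst (hsplit ▸ hw) hvs hvt
    (fun g hg => by
      obtain ⟨hgw, hvg⟩ := Finset.mem_filter.1 (FreeAbelianGroup.support_filter p w ▸ hg)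
      exact ⟨hvg, fun u hu => hmin u (mem_chainVerts.2 ⟨g, hgw, hu⟩)⟩)
    fun g hg => (hwo g hg).2
  have hlkY := ascLk_subset_subLevel (f := f) hK hvs
  obtain ⟨b, rfl⟩ := hlk c <|
    chainIncl_injective hlkY d (by rw [← bdK_chainIncl, hc, bdK_bdK, map_zero])
  have hverts : ∀ u ∈ chainVerts (w.filter (¬ p ·) + chainIncl hlkY (d + 2) b),
      u ≠ v ∧ (u ∈ chainVerts w ∨ (({v, u} : Finset V) ∈ K ∧ lexLt h f v u)) := by
    intro u hu
    rcases Finset.mem_union.1 (chainVerts_add_subset _ _ hu) with hu | hu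
    · obtain ⟨g, hg, hug⟩ := mem_chainVerts.1 hu
      obtain ⟨hgw, hvg⟩ := hwo g hg
      exact ⟨fun huv => hvg (huv ▸ hug), Or.inl (mem_chainVerts.2 ⟨g, hgw, hug⟩)⟩
    · obtain ⟨hvu, hvuK, hlex⟩ :=
        singleton_mem_of_mem_chainVerts (chainVerts_chainIncl_subset hlkY b hu)
      exact ⟨fun huv => hvu (huv ▸ Finset.mem_singleton_self u),
        Or.inr ⟨hvuK, hlex u (Finset.mem_singleton_self u)⟩⟩
  refine ⟨w.filter (¬ p ·) + chainIncl hlkY (d + 2) b, ?_, fun hv' => (hverts v hv').1 rfl,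
    fun u hu => (hverts u hu).2⟩
  rw [map_add, bdK_chainIncl, hc, ← map_add, add_comm (w.filter _), hsplit, hw]

theorem mem_range_bdK_of_forall_le {s : EReal} {t : ℝ} (hst : s ≤ t) {d : ℕ}
    {z : ChainsK (SubLevel K h t) (d + 1)} {w : ChainsK (SubLevel K h s) (d + 2)}
    (hw : bdK _ (d + 1) w = chainIncl (subLevel_anti hst) (d + 1) z)
    (hverts : ∀ u ∈ chainVerts w, t ≤ h u) :
    z ∈ Set.range (bdK (SubLevel K h t) (d + 1)) := by
  obtain ⟨y, rfl⟩ := mem_range_chainIncl (subLevel_anti hst) fun g hg σ hσ =>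
    ⟨(g.2 σ hσ).1, fun u hu =>
      EReal.coe_le_coe_iff.2 (hverts u (mem_chainVerts.2 ⟨g, hg, hσ u hu⟩))⟩
  exact ⟨y, chainIncl_injective _ _ (by rw [← bdK_chainIncl, hw])⟩

theorem mem_range_bdK_of_bdK_eq_chainIncl (hK : IsCpx K)
    (htie : ∀ v w : V, ({v, w} : Finset V) ∈ K → v ≠ w → h v = h w → f v ≠ f w)
    (hdisc : ∃ ε > (0 : ℝ), ∀ v w : V, ({v, w} : Finset V) ∈ K → v ≠ w →
      h v ≠ h w → ε ≤ |h v - h w|)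
    (hfin : (Set.range f).Finite) {s : EReal} {t : ℝ} (hst : s ≤ t) {d : ℕ}
    (hlk : ∀ v : V, s ≤ (h v : EReal) → h v < t →
      ∀ c : ChainsK (AscLk K h f v) (d + 1), bdK _ d c = 0 →
        c ∈ Set.range (bdK (AscLk K h f v) (d + 1)))
    (z : ChainsK (SubLevel K h t) (d + 1)) (w : ChainsK (SubLevel K h s) (d + 2))
    (hw : bdK _ (d + 1) w = chainIncl (subLevel_anti hst) (d + 1) z) :
    z ∈ Set.range (bdK (SubLevel K h t) (d + 1)) := by
  obtain ⟨ε, hε, hgap⟩ := hdisc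
  have := hfin.to_subtype
  let low (w : ChainsK (SubLevel K h s) (d + 2)) := (chainVerts w).filter (h · < t)
  induction w using (InvImage.wf (fun w => (low w).val.map (morseKey h f t ε))
    Multiset.wellFounded_isDershowitzMannaLT).induction with
  | _ w ih => ?_
  rcases (low w).eq_empty_or_nonempty with hlow | hlow
  · refine mem_range_bdK_of_forall_le hst hw fun u hu => not_lt.1 fun hut => ?_
    exact Finset.notMem_empty u (hlow ▸ Finset.mem_filter.2 ⟨hu, hut⟩)
  obtain ⟨v, hvlow, hvmin⟩ := (low w).exists_min_image (fun u => toLex (h u, f u)) hlow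
  obtain ⟨hv, hvt⟩ := Finset.mem_filter.1 hvlow
  obtain ⟨w', hw', hvw', hnew⟩ := exists_fill_avoiding_vertex hK htie hst hw hv hvt
    (fun u hu hut =>
      lexLt_iff_toLex_lt.not.2 (hvmin u (Finset.mem_filter.2 ⟨hu, hut⟩)).not_gt)
    (hlk v (le_of_mem_chainVerts hv) hvt)
  refine ih w' (Finset.isDershowitzMannaLT_map_val hvlow
    (fun hv' => hvw' (Finset.mem_filter.1 hv').1) fun u hu hulow => ?_) hw'
  obtain ⟨hu, hut⟩ := Finset.mem_filter.1 hu
  rcases hnew u hu with hold | ⟨hadj, hlex⟩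
  · exact absurd (Finset.mem_filter.2 ⟨hold, hut⟩) hulow
  · exact morseKey_lt hε (hgap v u hadj fun hvu => hvw' (hvu ▸ hu)) hlex hut

end Morse

theorem stmt14_general {V : Type} [DecidableEq V] (K : Set (Finset V)) (hK : IsCpx K)
    (h f : V → ℝ) (m : ℕ)
    (hdisc : ∃ ε > (0 : ℝ), ∀ v w : V, ({v, w} : Finset V) ∈ K → v ≠ w →
      h v ≠ h w → ε ≤ |h v - h w|)
    (hfin : (Set.range f).Finite)
    (htie : ∀ v w : V, ({v, w} : Finset V) ∈ K → v ≠ w → h v = h w → f v ≠ f w)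
    (t : ℝ) (s : EReal) (hst : s < (t : EReal))
    (hlkH : ∀ v : V, s ≤ (h v : EReal) → h v < t →
      ∀ z : ChainsK (AscLk K h f v) (m + 1 + 1),
        bdK (AscLk K h f v) (m + 1) z = 0 →
        z ∈ Set.range (bdK (AscLk K h f v) (m + 1 + 1))) :
    ∀ z : ChainsK (SubLevel K h (t : EReal)) (m + 1 + 1),
      bdK (SubLevel K h (t : EReal)) (m + 1) z = 0 →
      chainIncl (K := SubLevel K h (t : EReal)) (K' := SubLevel K h s)
          (fun σ hσ => ⟨hσ.1, fun v hv => le_trans hst.le (hσ.2 v hv)⟩) (m + 1 + 1) z ∈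
        Set.range (bdK (SubLevel K h s) (m + 1 + 1)) →
      z ∈ Set.range (bdK (SubLevel K h (t : EReal)) (m + 1 + 1)) := by
  rintro z - ⟨w, hw⟩
  exact mem_range_bdK_of_bdK_eq_chainIncl hK htie hdisc hfin hst.le hlkH z w hw

/-- With the hypotheses of the two-variable Morse Lemma, if additionally every vertex `v`
with `s ≤ h(v) < t` satisfies `H̃_{m+1}(lk^↑ v) = 0`, then the inclusion
`Y_{h≥t} → Y_{h≥s}` induces an injection on reduced homology `H̃_{m+1}`: every reduced
cycle of degree `m+1` in `Y_{h≥t}` which becomes a boundary in `Y_{h≥s}` is already a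
boundary in `Y_{h≥t}`. -/
theorem stmt14 {V : Type} [DecidableEq V] (K : Set (Finset V)) (hK : IsCpx K)
    (h f : V → ℝ) (m : ℕ)
    (hdisc : ∃ ε > (0 : ℝ), ∀ v w : V, ({v, w} : Finset V) ∈ K → v ≠ w →
      h v ≠ h w → ε ≤ |h v - h w|)
    (hfin : (Set.range f).Finite)
    (htie : ∀ v w : V, ({v, w} : Finset V) ∈ K → v ≠ w → h v = h w → f v ≠ f w)
    (t : ℝ) (s : EReal) (hst : s < (t : EReal))
    (hlk : ∀ v : V, s ≤ (h v : EReal) → h v < t →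
      IsConnTop (Realization (AscLk K h f v)) ((m : ℤ) - 1))
    (hlkH : ∀ v : V, s ≤ (h v : EReal) → h v < t →
      ∀ z : ChainsK (AscLk K h f v) (m + 1 + 1),
        bdK (AscLk K h f v) (m + 1) z = 0 →
        z ∈ Set.range (bdK (AscLk K h f v) (m + 1 + 1))) :
    ∀ z : ChainsK (SubLevel K h (t : EReal)) (m + 1 + 1),
      bdK (SubLevel K h (t : EReal)) (m + 1) z = 0 →
      chainIncl (K := SubLevel K h (t : EReal)) (K' := SubLevel K h s)
          (fun σ hσ => ⟨hσ.1, fun v hv => le_trans hst.le (hσ.2 v hv)⟩) (m + 1 + 1) z ∈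
        Set.range (bdK (SubLevel K h s) (m + 1 + 1)) →
      z ∈ Set.range (bdK (SubLevel K h (t : EReal)) (m + 1 + 1)) :=
  stmt14_general K hK h f m hdisc hfin htie t s hst hlkH
end

section
/- If P ⊆ E = {1,1̄,...,n,n̄} is a positive subset (ī ∈ P implies i ∈ P) with defect zero (i ∈ P implies ī ∈ P) and weight w(P) ≥ 2 (where weight counts the pairs {j,j̄} ⊆ P), then the complex I^↑(P;pos) of ascending symmetric ideal edges contained in P is covered by the stars of the hubs Θ_i := P \ {ī} for i ∈ P ∩ [n], the intersection of the stars of k distinct hubs Θ_{i_1},...,Θ_{i_k} is isomorphic to I^↑(P \ {ī_1,...,ī_k}; pos), and the nerve of this covering is the boundary of a (w(P)-1)-simplex. -/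
/-!
An ascending symmetric ideal edge `A ⊆ P` is compatible with the hub `Θ_i = P \ {ī}` exactly when
`ī ∉ A`: it cannot contain `Θ_i`, since then `A = P` and `P` splits no pair, and it cannot be
disjoint from `Θ_i`, having at least two elements. Everything follows from this.
A maximal edge `A` of a simplex splits some `j`, with `j ∈ A` and `j̄ ∉ A`; any other edge of the
simplex lies in `A` or is disjoint from it, and in the latter case containing `j̄` would make it
split `j` the wrong way, so the simplex lies in the star of `Θ_j`. An ascending edge always
contains some `k̄` (otherwise each of its elements is a split unbarred one, and only one pair is
split), so no edge lies in the star of every hub; while for hubs `i ∈ T` and `j ∉ T` the edge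
`{i, j, j̄}` lies in the stars of all `Θ_t`, `t ∈ T`.
-/

variable {n : ℕ}

lemma not_splits_of_pos {P : Finset (Fin n × Bool)}
    (hpos : ∀ i : Fin n, ((i, true) ∈ P ↔ (i, false) ∈ P)) (j : Fin n) : ¬ Splits P j := by
  unfold Splits
  rw [hpos j]
  rintro (⟨h, h'⟩ | ⟨h, h'⟩) <;> exact h' h

lemma IsAscSIE.mem_and_notMem_of_splits {A : Finset (Fin n × Bool)} (hA : IsAscSIE A)
    {j : Fin n} (hj : Splits A j) : (j, false) ∈ A ∧ (j, true) ∉ A := by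
  have := hA.2 j hj
  rcases hj with h | h <;> tauto

lemma IsAscSIE.exists_true_mem {A : Finset (Fin n × Bool)} (hA : IsAscSIE A) :
    ∃ k, (k, true) ∈ A := by
  by_contra! hbar
  obtain ⟨⟨hcard, -, j, -, hj⟩, -⟩ := hA
  have hsub : A ⊆ {(j, false)} := by
    rintro ⟨k, _ | _⟩ hk
    · rw [hj k (Or.inl ⟨hk, hbar k⟩)]
      exact Finset.mem_singleton_self _
    · exact absurd hk (hbar k)
  have := Finset.card_le_card hsub
  rw [Finset.card_singleton] at this
  omega

lemma compat_erase_iff {P A : Finset (Fin n × Bool)}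
    (hpos : ∀ i : Fin n, ((i, true) ∈ P ↔ (i, false) ∈ P))
    (hA : IsSIE A) (hAP : A ⊆ P) (i : Fin n) :
    Compat A (P.erase (i, true)) ↔ (i, true) ∉ A := by
  refine ⟨?_, fun hi => Or.inl fun x hx => Finset.mem_erase.mpr ⟨fun h => hi (h ▸ hx), hAP hx⟩⟩
  rintro (hsub | hsup | hdisj) hi
  · simpa using hsub hi
  · have hPA : A = P := hAP.antisymm fun x hx => by
      by_cases hx' : x = (i, true)
      · exact hx' ▸ hi
      · exact hsup (Finset.mem_erase.mpr ⟨hx', hx⟩)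
    obtain ⟨j, hj, -⟩ := hA.2.2
    exact not_splits_of_pos hpos j (hPA ▸ hj)
  · have hsub : A ⊆ {(i, true)} := fun x hx => by
      by_contra hne
      exact Finset.disjoint_left.mp hdisj hx
        (Finset.mem_erase.mpr ⟨by simpa using hne, hAP hx⟩)
    have := Finset.card_le_card hsub
    rw [Finset.card_singleton] at this
    have := hA.1
    omega

lemma IsAscSIE.true_notMem_of_compat {A B : Finset (Fin n × Bool)} (hA : IsAscSIE A)
    (hB : IsAscSIE B) (hAB : Compat A B) (hmax : ¬ A ⊂ B) {j : Fin n} (hj : Splits A j) :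
    (j, true) ∉ B := by
  obtain ⟨hjA, hjA'⟩ := hA.mem_and_notMem_of_splits hj
  rcases hAB with hsub | hsup | hdisj
  · rwa [← hsub.eq_of_not_ssubset hmax]
  · exact fun h => hjA' (hsup h)
  · intro h
    have hjB : (j, false) ∉ B := Finset.disjoint_left.mp hdisj hjA
    exact hjB (hB.2 j (Or.inr ⟨h, hjB⟩))

lemma splits_triple_iff {i j k : Fin n} (hij : i ≠ j) :
    Splits ({(i, false), (j, false), (j, true)} : Finset (Fin n × Bool)) k ↔ k = i := by
  change Xor _ _ ↔ _
  by_cases hki : k = i <;> by_cases hkj : k = j <;> simp_all [xor_def]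

lemma isAscSIE_triple {i j : Fin n} (hij : i ≠ j) :
    IsAscSIE ({(i, false), (j, false), (j, true)} : Finset (Fin n × Bool)) := by
  refine ⟨⟨?_, ?_, i, (splits_triple_iff hij).2 rfl, fun k => (splits_triple_iff hij).1⟩,
    fun k hk => ?_⟩
  · rw [Finset.card_insert_of_notMem (by simp [hij]), Finset.card_pair (by simp)]
    omega
  · intro h
    have : (i, true) ∈ ({(i, false), (j, false), (j, true)} : Finset (Fin n × Bool)) :=
      h ▸ Finset.mem_univ _
    simp [hij] at this
  · simp [(splits_triple_iff hij).1 hk]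

section Hubs

variable {P : Finset (Fin n × Bool)} (hpos : ∀ i : Fin n, ((i, true) ∈ P ↔ (i, false) ∈ P))
include hpos

lemma exists_hub_compat_of_pairwise_compat (hhub : ∃ i, (i, false) ∈ P)
    {S : Finset (Finset (Fin n × Bool))} (hS : ∀ A ∈ S, IsAscSIE A ∧ A ⊆ P)
    (hcompat : ∀ A ∈ S, ∀ B ∈ S, Compat A B) :
    ∃ i : Fin n, (i, false) ∈ P ∧ ∀ A ∈ S, Compat A (P.erase (i, true)) := by
  rcases S.eq_empty_or_nonempty with rfl | hne
  · simpa using hhub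
  obtain ⟨A, hAS, hmax⟩ := S.exists_maximal hne
  obtain ⟨hA, hAP⟩ := hS A hAS
  obtain ⟨j, hj, -⟩ := hA.1.2.2
  refine ⟨j, hAP (hA.mem_and_notMem_of_splits hj).1, fun B hBS => ?_⟩
  obtain ⟨hB, hBP⟩ := hS B hBS
  rw [compat_erase_iff hpos hB.1 hBP]
  exact hA.true_notMem_of_compat hB (hcompat A hAS B hBS) (fun h => h.2 (hmax hBS h.1)) hj

lemma subset_sdiff_image_iff {A : Finset (Fin n × Bool)} (hA : IsSIE A) (T : Finset (Fin n)) :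
    A ⊆ P \ T.image (fun i => (i, true)) ↔
      A ⊆ P ∧ ∀ i ∈ T, Compat A (P.erase (i, true)) := by
  refine Iff.trans ?_ (and_congr_right fun hAP =>
    forall₂_congr fun i _ => (compat_erase_iff hpos hA hAP i).symm)
  simp only [Finset.subset_iff, Finset.mem_sdiff, Finset.mem_image]
  grind

lemma forall_compat_hubs_iff (T : Finset (Fin n)) (S : Finset (Finset (Fin n × Bool))) :
    ((∀ A ∈ S, IsAscSIE A ∧ A ⊆ P) ∧ (∀ A ∈ S, ∀ B ∈ S, Compat A B) ∧
        ∀ i ∈ T, ∀ A ∈ S, Compat A (P.erase (i, true))) ↔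
      ((∀ A ∈ S, IsAscSIE A ∧ A ⊆ P \ T.image (fun i => (i, true))) ∧
        (∀ A ∈ S, ∀ B ∈ S, Compat A B)) := by
  constructor
  · rintro ⟨hS, hcompat, hhub⟩
    refine ⟨fun A hA => ⟨(hS A hA).1, ?_⟩, hcompat⟩
    exact (subset_sdiff_image_iff hpos (hS A hA).1.1 T).2 ⟨(hS A hA).2, fun i hi => hhub i hi A hA⟩
  · rintro ⟨hS, hcompat⟩
    have hS' A (hA : A ∈ S) := (subset_sdiff_image_iff hpos (hS A hA).1.1 T).1 (hS A hA).2
    exact ⟨fun A hA => ⟨(hS A hA).1, (hS' A hA).1⟩, hcompat, fun i hi A hA => (hS' A hA).2 i hi⟩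

lemma not_forall_compat_hubs {A : Finset (Fin n × Bool)} (hA : IsAscSIE A) (hAP : A ⊆ P) :
    ¬ ∀ i, (i, false) ∈ P → Compat A (P.erase (i, true)) := by
  obtain ⟨k, hk⟩ := hA.exists_true_mem
  exact fun h => (compat_erase_iff hpos hA.1 hAP k).1 (h k ((hpos k).1 (hAP hk))) hk

lemma exists_compat_hubs_of_mem_of_notMem {i j : Fin n} {T : Finset (Fin n)} (hi : i ∈ T)
    (hj : j ∉ T) (hTP : ∀ t ∈ T, (t, false) ∈ P) (hjP : (j, false) ∈ P) :
    ∃ A : Finset (Fin n × Bool), IsAscSIE A ∧ A ⊆ P ∧ ∀ t ∈ T, Compat A (P.erase (t, true)) := by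
  have hij : i ≠ j := by rintro rfl; exact hj hi
  have hAP : ({(i, false), (j, false), (j, true)} : Finset (Fin n × Bool)) ⊆ P := by
    simp [Finset.insert_subset_iff, hTP i hi, hjP, hpos j]
  refine ⟨_, isAscSIE_triple hij, hAP, fun t ht => ?_⟩
  rw [compat_erase_iff hpos (isAscSIE_triple hij).1 hAP]
  have htj : t ≠ j := by rintro rfl; exact hj ht
  simp [htj]

end Hubs

/-- For a positive defect-zero subset `P ⊆ E` of weight at least `2`:
(1) every simplex of `I^↑(P;pos)` (a pairwise compatible family of ascending symmetric
ideal edges contained in `P`) lies in the star of some hub `Θ_i = P \ {ī}`;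
(2) the intersection of the stars of the hubs `Θ_i`, `i ∈ T`, is exactly
`I^↑(P \ {ī : i ∈ T}; pos)`;
(3) the nerve of the covering by the stars is the boundary of the `(w(P)-1)`-simplex:
a set `T` of hubs has a common vertex in their stars iff `T` is not all of the hubs. -/
theorem stmt19 (n : ℕ) (P : Finset (Fin n × Bool))
    (hpos : ∀ i : Fin n, ((i, true) ∈ P ↔ (i, false) ∈ P))
    (hw : 2 ≤ (Finset.univ.filter fun i : Fin n => (i, false) ∈ P).card) :
    (∀ S : Finset (Finset (Fin n × Bool)),
      (∀ A ∈ S, IsAscSIE A ∧ A ⊆ P) → (∀ A ∈ S, ∀ B ∈ S, Compat A B) →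
      ∃ i : Fin n, (i, false) ∈ P ∧ ∀ A ∈ S, Compat A (P.erase (i, true))) ∧
    (∀ T : Finset (Fin n), T.Nonempty → (∀ i ∈ T, (i, false) ∈ P) →
      ∀ S : Finset (Finset (Fin n × Bool)),
        (((∀ A ∈ S, IsAscSIE A ∧ A ⊆ P) ∧ (∀ A ∈ S, ∀ B ∈ S, Compat A B) ∧
            ∀ i ∈ T, ∀ A ∈ S, Compat A (P.erase (i, true))) ↔
          ((∀ A ∈ S, IsAscSIE A ∧ A ⊆ P \ T.image (fun i => (i, true))) ∧
            (∀ A ∈ S, ∀ B ∈ S, Compat A B)))) ∧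
    (∀ T : Finset (Fin n), T.Nonempty → (∀ i ∈ T, (i, false) ∈ P) →
      ((∃ A : Finset (Fin n × Bool), IsAscSIE A ∧ A ⊆ P ∧
          ∀ i ∈ T, Compat A (P.erase (i, true))) ↔
        T ≠ Finset.univ.filter fun i : Fin n => (i, false) ∈ P)) := by
  have hhub : ∃ i, (i, false) ∈ P := by
    simpa [Finset.filter_nonempty_iff] using Finset.card_pos.1 (zero_lt_two.trans_le hw)
  refine ⟨fun S => exists_hub_compat_of_pairwise_compat hpos hhub,
    fun T _ _ => forall_compat_hubs_iff hpos T, fun T hT hTP => ⟨?_, fun hne => ?_⟩⟩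
  · rintro ⟨A, hA, hAP, hcompat⟩ rfl
    exact not_forall_compat_hubs hpos hA hAP fun i hi => hcompat i (by simpa using hi)
  · have hTsub : T ⊆ Finset.univ.filter fun i : Fin n => (i, false) ∈ P := fun i hi => by
      simpa using hTP i hi
    obtain ⟨j, hj, hjT⟩ := Finset.exists_of_ssubset (hTsub.ssubset_of_ne hne)
    obtain ⟨i, hi⟩ := hT
    exact exists_compat_hubs_of_mem_of_notMem hpos hi hjT hTP (by simpa using hj)
end
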